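/- Under the staggered difference-in-differences setup with propensity scores, for every baseline period s and every g, t with 0 ≤ s < g ≤ t ≤ T and P(G = g) > 0, the group-period ATT equals the population weighted functional that pools all not-yet-treated groups as reference: τ_{g,t} = (1/P(G = g)) · E[ 1{G=g} (Y_t − Y_s) − Σ_{k=s+1}^{t} 1{G>k} · (π_{g,k}(X_k) / Σ_{l=k+1}^{T+1} π_{l,k}(X_k)) · ΔY_k ]. -/

import Mathlib

open MeasureTheory Finset Filter

namespace StaggeredDiD

/-- Staggered difference-in-differences setup: probability space, `T+1` periods,
group variable `G` with values in `{1, …, T+1}` (`T+1` = never treated),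
time-varying covariates `X t`, potential outcomes `Y g t` (initiating treatment in
period `g`, outcome in period `t`), no anticipation, and conditional parallel trends
with conditional-trend functions `δ0 t`. -/
structure Setup (Ω : Type*) [MeasurableSpace Ω] (𝒳 : Type*) [MeasurableSpace 𝒳] where
  μ : Measure Ω
  prob : IsProbabilityMeasure μ
  T : ℕ
  hT : 1 ≤ T
  G : Ω → ℕ
  measG : Measurable G
  rangeG : ∀ ω, 1 ≤ G ω ∧ G ω ≤ T + 1
  X : ℕ → Ω → 𝒳
  measX : ∀ t, Measurable (X t)
  Y : ℕ → ℕ → Ω → ℝ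
  measY : ∀ g t, Measurable (Y g t)
  intY : ∀ g t, Integrable (Y g t) μ
  noAnticipation : ∀ g t, t < g → Y g t =ᵐ[μ] Y (T + 1) t
  δ0 : ℕ → 𝒳 → ℝ
  measδ0 : ∀ t, Measurable (δ0 t)
  bddδ0 : ∀ t, ∃ C, ∀ x, |δ0 t x| ≤ C
  parallel : ∀ t, 1 ≤ t → t ≤ T → ∀ g, 1 ≤ g → g ≤ T + 1 →
    ∀ h : 𝒳 → ℝ, Measurable h → (∃ C, ∀ x, |h x| ≤ C) →
    ∫ ω, (if G ω = g then (1 : ℝ) else 0) * h (X t ω) * (Y (T + 1) t ω - Y (T + 1) (t - 1) ω) ∂μ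
      = ∫ ω, (if G ω = g then (1 : ℝ) else 0) * h (X t ω) * δ0 t (X t ω) ∂μ

variable {Ω : Type*} [MeasurableSpace Ω] {𝒳 : Type*} [MeasurableSpace 𝒳]

/-- Observed outcome, via consistency `Y_t = Y_t(G)`. -/
noncomputable def Setup.Yobs (S : Setup Ω 𝒳) (t : ℕ) (ω : Ω) : ℝ := S.Y (S.G ω) t ω

/-- Indicator `1{G = g}`. -/
noncomputable def Setup.ind (S : Setup Ω 𝒳) (g : ℕ) (ω : Ω) : ℝ := if S.G ω = g then 1 else 0

/-- Indicator `1{G > k}` (not yet treated in period `k`). -/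
noncomputable def Setup.indGT (S : Setup Ω 𝒳) (k : ℕ) (ω : Ω) : ℝ := if k < S.G ω then 1 else 0

/-- `P(G = g)`. -/
noncomputable def Setup.Pg (S : Setup Ω 𝒳) (g : ℕ) : ℝ := ∫ ω, S.ind g ω ∂S.μ

/-- Group-period ATT `τ_{g,t} = E[1{G=g}(Y_t(g) − Y_t(∞))] / P(G=g)`. -/
noncomputable def Setup.tau (S : Setup Ω 𝒳) (g t : ℕ) : ℝ :=
  (∫ ω, S.ind g ω * (S.Y g t ω - S.Y (S.T + 1) t ω) ∂S.μ) / S.Pg g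

/-- Staggered DiD setup with propensity scores `π g t` satisfying positivity. -/
structure SetupPS (Ω : Type*) [MeasurableSpace Ω] (𝒳 : Type*) [MeasurableSpace 𝒳]
    extends Setup Ω 𝒳 where
  η : ℝ
  ηpos : 0 < η
  π : ℕ → ℕ → 𝒳 → ℝ
  measπ : ∀ g t, Measurable (π g t)
  πmem : ∀ g t x, π g t x ∈ Set.Icc η 1
  propensity : ∀ t, t ≤ T → ∀ g, 1 ≤ g → g ≤ T + 1 →
    ∀ h : 𝒳 → ℝ, Measurable h → (∃ C, ∀ x, |h x| ≤ C) →
    ∫ ω, (if G ω = g then (1 : ℝ) else 0) * h (X t ω) ∂μ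
      = ∫ ω, π g t (X t ω) * h (X t ω) ∂μ

section Aux

/-- Telescoping sum over `Icc (s+1) t`. -/
lemma tele_sum (f : ℕ → ℝ) {s t : ℕ} (h : s ≤ t) :
    ∑ k ∈ Finset.Icc (s + 1) t, (f k - f (k - 1)) = f t - f s := by
  induction t, h using Nat.le_induction with
  | base => simp
  | succ n hn ih =>
    rw [Finset.sum_Icc_succ_top (by omega)]
    simp only [Nat.add_sub_cancel]
    rw [ih]; ring

lemma Setup.meas_ind (S : Setup Ω 𝒳) (l : ℕ) : Measurable (S.ind l) := by
  unfold Setup.ind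
  exact Measurable.ite (S.measG (measurableSet_singleton l)) measurable_const measurable_const

lemma Setup.norm_ind_le (S : Setup Ω 𝒳) (l : ℕ) (ω : Ω) : ‖S.ind l ω‖ ≤ 1 := by
  unfold Setup.ind; split <;> simp

lemma Setup.int_bdd_mul (S : Setup Ω 𝒳) {f : Ω → ℝ} (hf : Integrable f S.μ)
    {c : Ω → ℝ} (hc : Measurable c) (hb : ∃ C, ∀ ω, ‖c ω‖ ≤ C) :
    Integrable (fun ω => c ω * f ω) S.μ := by
  obtain ⟨C, hC⟩ := hb
  exact hf.bdd_mul hc.aestronglyMeasurable (Eventually.of_forall hC)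

lemma Setup.int_of_bdd (S : Setup Ω 𝒳) {c : Ω → ℝ} (hc : Measurable c)
    (hb : ∃ C, ∀ ω, ‖c ω‖ ≤ C) : Integrable c S.μ := by
  haveI := S.prob
  obtain ⟨C, hC⟩ := hb
  exact (integrable_const C).mono' hc.aestronglyMeasurable (Eventually.of_forall hC)

/-- Consistency, pointwise, with a multiplicative weight. -/
lemma Setup.consist (S : Setup Ω 𝒳) (l u v : ℕ) (c : ℝ) (ω : Ω) :
    S.ind l ω * c * (S.Yobs u ω - S.Yobs v ω) = S.ind l ω * c * (S.Y l u ω - S.Y l v ω) := by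
  by_cases h : S.G ω = l <;> simp [Setup.ind, Setup.Yobs, h]

/-- Consistency, pointwise. -/
lemma Setup.consist1 (S : Setup Ω 𝒳) (l u v : ℕ) (ω : Ω) :
    S.ind l ω * (S.Yobs u ω - S.Yobs v ω) = S.ind l ω * (S.Y l u ω - S.Y l v ω) := by
  by_cases h : S.G ω = l <;> simp [Setup.ind, Setup.Yobs, h]

/-- Decompose the not-yet-treated indicator into group indicators. -/
lemma Setup.indGT_eq (S : Setup Ω 𝒳) (k : ℕ) (ω : Ω) :
    S.indGT k ω = ∑ l ∈ Finset.Icc (k + 1) (S.T + 1), S.ind l ω := by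
  have h := S.rangeG ω
  unfold Setup.indGT Setup.ind
  rw [Finset.sum_ite_eq]
  simp only [Finset.mem_Icc]
  exact if_congr (by omega) rfl rfl

lemma SetupPS.sumπ_pos (S : SetupPS Ω 𝒳) {k : ℕ} (hk : k ≤ S.T) (x : 𝒳) :
    0 < ∑ l ∈ Finset.Icc (k + 1) (S.T + 1), S.π l k x := by
  apply Finset.sum_pos
  · exact fun l _ => lt_of_lt_of_le S.ηpos (S.πmem l k x).1
  · exact ⟨k + 1, by rw [Finset.mem_Icc]; omega⟩

lemma SetupPS.w_norm_le (S : SetupPS Ω 𝒳) (g : ℕ) {k : ℕ} (hk : k ≤ S.T) (x : 𝒳) :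
    ‖S.π g k x / ∑ l ∈ Finset.Icc (k + 1) (S.T + 1), S.π l k x‖ ≤ 1 / S.η := by
  have hD : S.η ≤ ∑ l ∈ Finset.Icc (k + 1) (S.T + 1), S.π l k x := by
    calc S.η ≤ S.π (k + 1) k x := (S.πmem (k + 1) k x).1
    _ ≤ _ := Finset.single_le_sum (f := fun l => S.π l k x)
        (fun i _ => le_trans S.ηpos.le (S.πmem i k x).1) (by rw [Finset.mem_Icc]; omega)
  have h0 : (0:ℝ) ≤ S.π g k x := le_trans S.ηpos.le (S.πmem g k x).1
  have h1 : S.π g k x ≤ 1 := (S.πmem g k x).2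
  rw [Real.norm_eq_abs, abs_of_nonneg (div_nonneg h0 (by linarith [S.ηpos]))]
  exact div_le_div₀ zero_le_one h1 S.ηpos hD

lemma SetupPS.w_meas (S : SetupPS Ω 𝒳) (g k : ℕ) :
    Measurable (fun x => S.π g k x / ∑ l ∈ Finset.Icc (k + 1) (S.T + 1), S.π l k x) :=
  (S.measπ g k).div (Finset.measurable_sum _ fun l _ => S.measπ l k)

/-- Integrability of the weighted reference-group terms. -/
lemma SetupPS.int_term (S : SetupPS Ω 𝒳) (g l : ℕ) {k : ℕ} (hk : k ≤ S.T) (u v : ℕ) :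
    Integrable (fun ω => S.ind l ω
      * (S.π g k (S.X k ω) / ∑ j ∈ Finset.Icc (k + 1) (S.T + 1), S.π j k (S.X k ω))
      * (S.Y l u ω - S.Y l v ω)) S.μ :=
  S.toSetup.int_bdd_mul ((S.intY l u).sub (S.intY l v))
    ((S.toSetup.meas_ind l).mul ((S.w_meas g k).comp (S.measX k)))
    ⟨1 * (1 / S.η), fun ω => by
      rw [norm_mul]
      exact mul_le_mul (S.toSetup.norm_ind_le l ω) (S.w_norm_le g hk _)
        (norm_nonneg _) zero_le_one⟩

/-- No anticipation + parallel trends + propensity, for one reference group `l > k`. -/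
lemma SetupPS.key (S : SetupPS Ω 𝒳) {k l : ℕ} (hk1 : 1 ≤ k) (hkT : k ≤ S.T)
    (hkl : k < l) (hl : l ≤ S.T + 1) (h : 𝒳 → ℝ) (hm : Measurable h)
    (hb : ∃ C, ∀ x, |h x| ≤ C) :
    ∫ ω, S.ind l ω * h (S.X k ω) * (S.Y l k ω - S.Y l (k - 1) ω) ∂S.μ
      = ∫ ω, S.π l k (S.X k ω) * (h (S.X k ω) * S.δ0 k (S.X k ω)) ∂S.μ := by
  have step1 : ∫ ω, S.ind l ω * h (S.X k ω) * (S.Y l k ω - S.Y l (k - 1) ω) ∂S.μ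
      = ∫ ω, S.ind l ω * h (S.X k ω) * (S.Y (S.T + 1) k ω - S.Y (S.T + 1) (k - 1) ω) ∂S.μ := by
    apply integral_congr_ae
    filter_upwards [S.noAnticipation l k hkl, S.noAnticipation l (k - 1) (by omega)]
      with ω h1 h2
    rw [h1, h2]
  rw [step1]
  have step2 := S.parallel k hk1 hkT l (by omega) hl h hm hb
  simp only [Setup.ind]
  rw [step2]
  have hb2 : ∃ C, ∀ x, |h x * S.δ0 k x| ≤ C := by
    obtain ⟨C1, hC1⟩ := hb
    obtain ⟨C2, hC2⟩ := S.bddδ0 k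
    exact ⟨C1 * C2, fun x => by
      rw [abs_mul]
      exact mul_le_mul (hC1 x) (hC2 x) (abs_nonneg _) ((abs_nonneg _).trans (hC1 x))⟩
  have step3 := S.propensity k hkT l (by omega) hl (fun x => h x * S.δ0 k x)
    (hm.mul (S.measδ0 k)) hb2
  simpa only [← mul_assoc] using step3

/-- Parallel trends with `h = 1`. -/
lemma SetupPS.trend (S : SetupPS Ω 𝒳) {g k : ℕ} (hg1 : 1 ≤ g) (hgT : g ≤ S.T + 1)
    (hk1 : 1 ≤ k) (hkT : k ≤ S.T) :
    ∫ ω, S.ind g ω * (S.Y (S.T + 1) k ω - S.Y (S.T + 1) (k - 1) ω) ∂S.μ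
      = ∫ ω, S.ind g ω * S.δ0 k (S.X k ω) ∂S.μ := by
  have := S.parallel k hk1 hkT g hg1 hgT (fun _ => 1) measurable_const ⟨1, by simp⟩
  simpa only [Setup.ind, mul_one] using this

/-- Summing over the not-yet-treated reference groups pools back to `1{G=g}δ0`. -/
lemma SetupPS.keysum (S : SetupPS Ω 𝒳) {g k : ℕ} (hg1 : 1 ≤ g) (hgT : g ≤ S.T + 1)
    (hk1 : 1 ≤ k) (hkT : k ≤ S.T) :
    ∫ ω, (∑ l ∈ Finset.Icc (k + 1) (S.T + 1),
        S.ind l ω * (S.π g k (S.X k ω) / ∑ j ∈ Finset.Icc (k + 1) (S.T + 1), S.π j k (S.X k ω))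
          * (S.Y l k ω - S.Y l (k - 1) ω)) ∂S.μ
      = ∫ ω, S.ind g ω * S.δ0 k (S.X k ω) ∂S.μ := by
  haveI := S.prob
  set w : 𝒳 → ℝ := fun x => S.π g k x / ∑ j ∈ Finset.Icc (k + 1) (S.T + 1), S.π j k x with hw
  have hwm : Measurable w := S.w_meas g k
  have hwb : ∀ x, ‖w x‖ ≤ 1 / S.η := fun x => S.w_norm_le g hkT x
  rw [integral_finset_sum _ fun l _ => S.int_term g l hkT k (k - 1)]
  have hterm : ∀ l ∈ Finset.Icc (k + 1) (S.T + 1),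
      ∫ ω, S.ind l ω * w (S.X k ω) * (S.Y l k ω - S.Y l (k - 1) ω) ∂S.μ
        = ∫ ω, S.π l k (S.X k ω) * (w (S.X k ω) * S.δ0 k (S.X k ω)) ∂S.μ := by
    intro l hl
    rw [Finset.mem_Icc] at hl
    exact S.key hk1 hkT (by omega) hl.2 w hwm
      ⟨1 / S.η, fun x => by simpa [Real.norm_eq_abs] using hwb x⟩
  rw [Finset.sum_congr rfl hterm]
  obtain ⟨Cδ, hCδ⟩ := S.bddδ0 k
  have hpt : ∀ x, (∑ l ∈ Finset.Icc (k + 1) (S.T + 1),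
      S.π l k x * (w x * S.δ0 k x)) = S.π g k x * S.δ0 k x := by
    intro x
    have hD := S.sumπ_pos hkT x
    rw [← Finset.sum_mul]
    simp only [hw]
    field_simp
  have hintl : ∀ l ∈ Finset.Icc (k + 1) (S.T + 1),
      Integrable (fun ω => S.π l k (S.X k ω) * (w (S.X k ω) * S.δ0 k (S.X k ω))) S.μ := by
    intro l _
    apply S.toSetup.int_of_bdd
    · exact ((S.measπ l k).comp (S.measX k)).mul
        ((hwm.comp (S.measX k)).mul ((S.measδ0 k).comp (S.measX k)))
    · refine ⟨1 * (1 / S.η * max Cδ 0), fun ω => ?_⟩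
      rw [norm_mul, norm_mul]
      have hπ : ‖S.π l k (S.X k ω)‖ ≤ 1 := by
        rw [Real.norm_eq_abs, abs_of_nonneg (le_trans S.ηpos.le (S.πmem l k _).1)]
        exact (S.πmem l k _).2
      have hδ : ‖S.δ0 k (S.X k ω)‖ ≤ max Cδ 0 :=
        le_trans (by simpa [Real.norm_eq_abs] using hCδ (S.X k ω)) (le_max_left _ _)
      exact mul_le_mul hπ
        (mul_le_mul (hwb _) hδ (norm_nonneg _) (div_nonneg zero_le_one S.ηpos.le))
        (mul_nonneg (norm_nonneg _) (norm_nonneg _)) zero_le_one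
  rw [← integral_finset_sum _ hintl,
    integral_congr_ae (Eventually.of_forall fun ω => hpt (S.X k ω))]
  have := (S.propensity k hkT g hg1 hgT (S.δ0 k) (S.measδ0 k) ⟨Cδ, hCδ⟩).symm
  simpa only [Setup.ind] using this

end Aux

/-- **Weighted identification pooling all not-yet-treated groups as reference.**
For every baseline period `s < g` and `1 ≤ g ≤ t ≤ T` with `P(G=g) > 0`,
`τ_{g,t} = (1/P(G=g)) E[1{G=g}(Y_t − Y_s)`
`− Σ_{k=s+1}^t 1{G>k} (π_{g,k}(X_k)/Σ_{l=k+1}^{T+1} π_{l,k}(X_k)) ΔY_k]`. -/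
theorem weighted_not_yet_treated (S : SetupPS Ω 𝒳) (s g t : ℕ)
    (hs : s < g) (hg : 1 ≤ g) (hgt : g ≤ t) (ht : t ≤ S.T) (hP : 0 < S.Pg g) :
    S.tau g t = (1 / S.Pg g) *
      ∫ ω, S.ind g ω * (S.Yobs t ω - S.Yobs s ω)
        - ∑ k ∈ Finset.Icc (s + 1) t,
            S.indGT k ω *
              (S.π g k (S.X k ω) / ∑ l ∈ Finset.Icc (k + 1) (S.T + 1), S.π l k (S.X k ω))
              * (S.Yobs k ω - S.Yobs (k - 1) ω) ∂S.μ := by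
  haveI := S.prob
  have hst : s ≤ t := (hs.trans_le hgt).le
  -- integrability facts
  have hIA : Integrable (fun ω => S.ind g ω * (S.Y g t ω - S.Y g s ω)) S.μ :=
    S.toSetup.int_bdd_mul ((S.intY g t).sub (S.intY g s)) (S.toSetup.meas_ind g)
      ⟨1, S.toSetup.norm_ind_le g⟩
  have hI1 : Integrable (fun ω => S.ind g ω * (S.Y g t ω - S.Y (S.T + 1) t ω)) S.μ :=
    S.toSetup.int_bdd_mul ((S.intY g t).sub (S.intY (S.T + 1) t)) (S.toSetup.meas_ind g)
      ⟨1, S.toSetup.norm_ind_le g⟩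
  have hI2 : Integrable (fun ω => S.ind g ω * (S.Y (S.T + 1) t ω - S.Y (S.T + 1) s ω)) S.μ :=
    S.toSetup.int_bdd_mul ((S.intY (S.T + 1) t).sub (S.intY (S.T + 1) s)) (S.toSetup.meas_ind g)
      ⟨1, S.toSetup.norm_ind_le g⟩
  have hI3 : ∀ k ∈ Finset.Icc (s + 1) t,
      Integrable (fun ω => S.ind g ω * (S.Y (S.T + 1) k ω - S.Y (S.T + 1) (k - 1) ω)) S.μ :=
    fun k _ => S.toSetup.int_bdd_mul ((S.intY (S.T + 1) k).sub (S.intY (S.T + 1) (k - 1)))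
      (S.toSetup.meas_ind g) ⟨1, S.toSetup.norm_ind_le g⟩
  have hIkl : ∀ k ∈ Finset.Icc (s + 1) t,
      Integrable (fun ω => ∑ l ∈ Finset.Icc (k + 1) (S.T + 1),
        S.ind l ω * (S.π g k (S.X k ω) / ∑ j ∈ Finset.Icc (k + 1) (S.T + 1), S.π j k (S.X k ω))
          * (S.Y l k ω - S.Y l (k - 1) ω)) S.μ := by
    intro k hk
    rw [Finset.mem_Icc] at hk
    exact integrable_finset_sum _ fun l _ => S.int_term g l (by omega) k (k - 1)
  -- Step 1: pointwise rewrite of the integrand via consistency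
  have hstep1 : (∫ ω, (S.ind g ω * (S.Yobs t ω - S.Yobs s ω)
        - ∑ k ∈ Finset.Icc (s + 1) t,
            S.indGT k ω *
              (S.π g k (S.X k ω) / ∑ l ∈ Finset.Icc (k + 1) (S.T + 1), S.π l k (S.X k ω))
              * (S.Yobs k ω - S.Yobs (k - 1) ω)) ∂S.μ)
      = ∫ ω, (S.ind g ω * (S.Y g t ω - S.Y g s ω)
        - ∑ k ∈ Finset.Icc (s + 1) t, ∑ l ∈ Finset.Icc (k + 1) (S.T + 1),
            S.ind l ω *
              (S.π g k (S.X k ω) / ∑ j ∈ Finset.Icc (k + 1) (S.T + 1), S.π j k (S.X k ω))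
              * (S.Y l k ω - S.Y l (k - 1) ω)) ∂S.μ := by
    apply integral_congr_ae
    apply Eventually.of_forall
    intro ω
    dsimp only
    congr 1
    · exact S.toSetup.consist1 g t s ω
    · apply Finset.sum_congr rfl
      intro k _
      rw [S.toSetup.indGT_eq k ω]
      simp only [Finset.sum_mul]
      exact Finset.sum_congr rfl fun l _ => S.toSetup.consist l k (k - 1) _ ω
  -- Step 2: split the integral and identify each k-term
  have hstep2 : (∫ ω, (S.ind g ω * (S.Y g t ω - S.Y g s ω)
        - ∑ k ∈ Finset.Icc (s + 1) t, ∑ l ∈ Finset.Icc (k + 1) (S.T + 1),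
            S.ind l ω *
              (S.π g k (S.X k ω) / ∑ j ∈ Finset.Icc (k + 1) (S.T + 1), S.π j k (S.X k ω))
              * (S.Y l k ω - S.Y l (k - 1) ω)) ∂S.μ)
      = (∫ ω, S.ind g ω * (S.Y g t ω - S.Y g s ω) ∂S.μ)
        - ∑ k ∈ Finset.Icc (s + 1) t, ∫ ω, S.ind g ω * S.δ0 k (S.X k ω) ∂S.μ := by
    rw [integral_sub hIA (integrable_finset_sum _ hIkl), integral_finset_sum _ hIkl]
    congr 1
    apply Finset.sum_congr rfl
    intro k hk
    rw [Finset.mem_Icc] at hk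
    exact S.keysum hg (by omega) (by omega) (by omega)
  -- Step 3: no anticipation at the base period + telescoping + parallel trends
  have hstep3 : (∫ ω, S.ind g ω * (S.Y g t ω - S.Y g s ω) ∂S.μ)
      = (∫ ω, S.ind g ω * (S.Y g t ω - S.Y (S.T + 1) t ω) ∂S.μ)
        + ∑ k ∈ Finset.Icc (s + 1) t, ∫ ω, S.ind g ω * S.δ0 k (S.X k ω) ∂S.μ := by
    have e1 : (fun ω => S.ind g ω * (S.Y g t ω - S.Y g s ω)) =ᵐ[S.μ]
        (fun ω => S.ind g ω * (S.Y g t ω - S.Y (S.T + 1) t ω)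
          + S.ind g ω * (S.Y (S.T + 1) t ω - S.Y (S.T + 1) s ω)) := by
      filter_upwards [S.noAnticipation g s hs] with ω hω
      rw [hω]; ring
    rw [integral_congr_ae e1, integral_add hI1 hI2]
    congr 1
    have e2 : ∀ ω, S.ind g ω * (S.Y (S.T + 1) t ω - S.Y (S.T + 1) s ω)
        = ∑ k ∈ Finset.Icc (s + 1) t,
            S.ind g ω * (S.Y (S.T + 1) k ω - S.Y (S.T + 1) (k - 1) ω) := by
      intro ω
      rw [← Finset.mul_sum, tele_sum (fun k => S.Y (S.T + 1) k ω) hst]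
    rw [integral_congr_ae (Eventually.of_forall e2), integral_finset_sum _ hI3]
    apply Finset.sum_congr rfl
    intro k hk
    rw [Finset.mem_Icc] at hk
    exact S.trend hg (by omega) (by omega) (by omega)
  rw [hstep1, hstep2, hstep3]
  simp only [Setup.tau]
  rw [add_sub_cancel_right, div_eq_mul_inv, one_div, mul_comm]

end StaggeredDiD
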